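/- Let p(w) = (w - w₁)^{n₁}(w - w₂)^{n₂}⋯(w - w_k)^{n_k} be a complex polynomial with distinct roots w₁,…,w_k, all having nonzero imaginary part, and let f ∈ L¹(ℝ). Then there exists y₀ ∈ L¹(ℝ) such that F(y₀)(w) = F(f)(w)/p(w) for all real w. -/

import Mathlib

open MeasureTheory Complex Filter

noncomputable def fourierT (f : ℝ → ℂ) (w : ℝ) : ℂ :=
  ∫ t : ℝ, Complex.exp (-(Complex.I * w * t)) * f t

noncomputable def heaviside (t : ℝ) : ℂ := if 0 ≤ t then 1 else 0

/-!
Dividing the Fourier transform by `p` amounts to dividing it successively by the linear factors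
`x - wᵢ`, each `nᵢ` times. Division by `x - w₀` with `Im w₀ > 0` is convolution with the integrable
kernel `t ↦ i e^{i w₀ t}` on `t > 0`, whose transform is `(x - w₀)⁻¹`; the reflection `t ↦ -t`
handles `Im w₀ < 0`.
-/

open Set FourierTransform
open scoped Convolution

lemma fourierT_eq_fourier (f : ℝ → ℂ) (x : ℝ) : fourierT f x = 𝓕 f (x / (2 * Real.pi)) := by
  rw [Real.fourier_real_eq_integral_exp_smul, fourierT]
  congr 1 with t
  rw [smul_eq_mul]
  congr 2
  push_cast
  field_simp

lemma fourierT_convolution {f g : ℝ → ℂ} (hf : Integrable f) (hg : Integrable g) (x : ℝ) :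
    fourierT (f ⋆[ContinuousLinearMap.mul ℂ ℂ] g) x = fourierT f x * fourierT g x := by
  simp only [fourierT_eq_fourier, Real.fourier_mul_convolution_eq hf hg]

lemma fourierT_comp_neg (f : ℝ → ℂ) (x : ℝ) : fourierT (fun t => f (-t)) x = fourierT f (-x) := by
  rw [fourierT, fourierT, ← integral_neg_eq_self]
  congr 1 with t
  push_cast
  ring_nf

lemma fourierT_neg (f : ℝ → ℂ) (x : ℝ) : fourierT (-f) x = -fourierT f x := by
  simp [fourierT, integral_neg]

lemma exists_fourierT_eq_inv_sub_of_im_pos {w₀ : ℂ} (him : 0 < w₀.im) :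
    ∃ g : ℝ → ℂ, Integrable g ∧ ∀ x : ℝ, fourierT g x = ((x : ℂ) - w₀)⁻¹ := by
  refine ⟨(Ioi 0).indicator fun t : ℝ => I * exp (I * w₀ * t), ?_, fun x => ?_⟩
  · rw [integrable_indicator_iff measurableSet_Ioi]
    exact (integrableOn_exp_mul_complex_Ioi (a := I * w₀) (by simpa using him) 0).const_mul I
  · have hre : (I * (w₀ - x)).re < 0 := by simpa using him
    have hne : w₀ - x ≠ 0 := fun h => him.ne' (by simpa using congrArg im h)
    calc fourierT ((Ioi 0).indicator fun t : ℝ => I * exp (I * w₀ * t)) x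
        = ∫ t in Ioi (0 : ℝ), I * exp (I * (w₀ - x) * t) := by
          rw [fourierT, ← integral_indicator measurableSet_Ioi]
          congr 1 with t
          by_cases ht : t ∈ Ioi 0
          · simp only [indicator_of_mem ht, mul_left_comm _ I, ← Complex.exp_add]
            ring_nf
          · simp [indicator_of_notMem ht]
      _ = ((x : ℂ) - w₀)⁻¹ := by
          rw [integral_const_mul, integral_exp_mul_complex_Ioi hre, ← neg_sub w₀]
          simp only [ofReal_zero, mul_zero, Complex.exp_zero]
          field_simp

lemma exists_fourierT_eq_inv_sub {w₀ : ℂ} (him : w₀.im ≠ 0) :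
    ∃ g : ℝ → ℂ, Integrable g ∧ ∀ x : ℝ, fourierT g x = ((x : ℂ) - w₀)⁻¹ := by
  rcases him.lt_or_gt with hneg | hpos
  · obtain ⟨g, hg, hgF⟩ := exists_fourierT_eq_inv_sub_of_im_pos (w₀ := -w₀) (by simpa using hneg)
    refine ⟨-fun t => g (-t), (hg.comp_neg).neg, fun x => ?_⟩
    rw [fourierT_neg, fourierT_comp_neg, hgF, ← inv_neg]
    push_cast
    ring_nf
  · exact exists_fourierT_eq_inv_sub_of_im_pos hpos

def IsL1FourierDivisor (q : ℝ → ℂ) : Prop :=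
  ∀ f : ℝ → ℂ, Integrable f → ∃ y : ℝ → ℂ, Integrable y ∧ ∀ x, fourierT y x = fourierT f x / q x

namespace IsL1FourierDivisor

lemma of_fourierT_eq_inv {q : ℝ → ℂ} {g : ℝ → ℂ} (hg : Integrable g)
    (hgq : ∀ x, fourierT g x = (q x)⁻¹) : IsL1FourierDivisor q := fun f hf =>
  ⟨f ⋆[ContinuousLinearMap.mul ℂ ℂ] g, hf.integrable_convolution _ hg, fun x => by
    rw [fourierT_convolution hf hg, hgq, div_eq_mul_inv]⟩

lemma sub_const {w₀ : ℂ} (him : w₀.im ≠ 0) : IsL1FourierDivisor fun x => (x : ℂ) - w₀ :=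
  let ⟨_, hg, hgF⟩ := exists_fourierT_eq_inv_sub him
  of_fourierT_eq_inv hg hgF

lemma one : IsL1FourierDivisor 1 := fun f hf => ⟨f, hf, fun x => by simp⟩

lemma mul {p q : ℝ → ℂ} (hp : IsL1FourierDivisor p) (hq : IsL1FourierDivisor q) :
    IsL1FourierDivisor (p * q) := fun f hf => by
  obtain ⟨y, hy, hyF⟩ := hp f hf
  obtain ⟨z, hz, hzF⟩ := hq y hy
  exact ⟨z, hz, fun x => by rw [hzF, hyF, div_div, Pi.mul_apply]⟩

lemma pow {q : ℝ → ℂ} (hq : IsL1FourierDivisor q) (m : ℕ) : IsL1FourierDivisor (q ^ m) := by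
  induction m with
  | zero => simpa using one
  | succ m ih => simpa [pow_succ] using ih.mul hq

lemma prod {ι : Type*} (s : Finset ι) {q : ι → ℝ → ℂ} (hq : ∀ i ∈ s, IsL1FourierDivisor (q i)) :
    IsL1FourierDivisor (∏ i ∈ s, q i) := by
  classical
  induction s using Finset.induction_on with
  | empty => simpa using one
  | insert a s ha ih =>
    rw [Finset.prod_insert ha]
    exact (hq a (s.mem_insert_self a)).mul (ih fun i hi => hq i (Finset.mem_insert_of_mem hi))

end IsL1FourierDivisor

theorem stmt_7_general (k : ℕ) (w : Fin k → ℂ)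
    (him : ∀ i, (w i).im ≠ 0) (n : Fin k → ℕ)
    (f : ℝ → ℂ) (hf : Integrable f) :
    ∃ y₀ : ℝ → ℂ, Integrable y₀ ∧
      ∀ x : ℝ, fourierT y₀ x = fourierT f x / ∏ i, ((x : ℂ) - w i) ^ (n i) := by
  have hp : IsL1FourierDivisor (∏ i, (fun x : ℝ => (x : ℂ) - w i) ^ n i) :=
    IsL1FourierDivisor.prod _ fun i _ => (IsL1FourierDivisor.sub_const (him i)).pow (n i)
  simpa using hp f hf

theorem stmt_7 (k : ℕ) (hk : 1 ≤ k) (w : Fin k → ℂ) (hdist : Function.Injective w)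
    (him : ∀ i, (w i).im ≠ 0) (n : Fin k → ℕ) (hn : ∀ i, 1 ≤ n i)
    (f : ℝ → ℂ) (hf : Integrable f) :
    ∃ y₀ : ℝ → ℂ, Integrable y₀ ∧
      ∀ x : ℝ, fourierT y₀ x = fourierT f x / ∏ i, ((x : ℂ) - w i) ^ (n i) :=
  stmt_7_general k w him n f hf
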